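/- For every n ≥ 1, the tensor rank of |W⟩^{⊗n} (regrouped as a tripartite vector) is at most 7^{n/2} when n is even, and at most 3·7^{(n−1)/2} when n is odd. -/

import Mathlib

open TensorProduct

/-- Tripartite tensor rank: minimal number of product vectors summing to `ψ`. -/
noncomputable def tRank {A B C : Type*} [AddCommGroup A] [Module ℂ A]
    [AddCommGroup B] [Module ℂ B] [AddCommGroup C] [Module ℂ C]
    (ψ : A ⊗[ℂ] (B ⊗[ℂ] C)) : ℕ :=
  sInf {r | ∃ (a : Fin r → A) (b : Fin r → B) (c : Fin r → C),
    ψ = ∑ i, a i ⊗ₜ[ℂ] (b i ⊗ₜ[ℂ] c i)}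

/-- `(ℂ²)^{⊗n}`, realized as functions on `n`-bit strings. -/
abbrev V (n : ℕ) : Type := (Fin n → Bool) → ℂ

/-- the computational-basis vector `|s⟩` of `n` qubits. -/
noncomputable def qb {n : ℕ} (s : Fin n → Bool) : V n := Pi.single s 1

/-- `W^{⊗n}` regrouped party-wise: in copy `k` the excitation goes to party `f k`. -/
noncomputable def Wn (n : ℕ) : V n ⊗[ℂ] (V n ⊗[ℂ] V n) :=
  ∑ f : Fin n → Fin 3,
    qb (fun k => decide (f k = 0)) ⊗ₜ[ℂ]
      (qb (fun k => decide (f k = 1)) ⊗ₜ[ℂ] qb (fun k => decide (f k = 2)))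

/-- `GHZ^{⊗n}` regrouped party-wise: `∑ₓ |x⟩|x⟩|x⟩`. -/
noncomputable def GHZn (n : ℕ) : V n ⊗[ℂ] (V n ⊗[ℂ] V n) :=
  ∑ x : Fin n → Bool, qb x ⊗ₜ[ℂ] (qb x ⊗ₜ[ℂ] qb x)

/-!
Tensor rank is submultiplicative for the party-wise product: if `ψ` and `φ` are sums of `r` and
`s` product vectors, multiplying the decompositions term by term in the algebra `A ⊗ (B ⊗ C)`
writes `ψ * φ` as a sum of `r * s` products. Concatenating bit strings realizes `W^{⊗(m+n)}` as
such a product of `W^{⊗m}` and `W^{⊗n}`, so the bound follows from the decompositions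
`W = |100⟩ + |010⟩ + |001⟩` into 3 products and of `W^{⊗2}` into 7 cubes.
-/
def IsSumOfProducts {R A B C : Type*} [CommSemiring R] [AddCommMonoid A] [Module R A]
    [AddCommMonoid B] [Module R B] [AddCommMonoid C] [Module R C]
    (ψ : A ⊗[R] (B ⊗[R] C)) (r : ℕ) : Prop :=
  ∃ (a : Fin r → A) (b : Fin r → B) (c : Fin r → C), ψ = ∑ i, a i ⊗ₜ[R] (b i ⊗ₜ[R] c i)

namespace IsSumOfProducts

section Module

variable {R A B C : Type*} [CommSemiring R] [AddCommMonoid A] [Module R A]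
  [AddCommMonoid B] [Module R B] [AddCommMonoid C] [Module R C]

theorem tmul (a : A) (b : B) (c : C) : IsSumOfProducts (a ⊗ₜ[R] (b ⊗ₜ[R] c)) 1 :=
  ⟨fun _ => a, fun _ => b, fun _ => c, by simp⟩

theorem add {ψ φ : A ⊗[R] (B ⊗[R] C)} {r s : ℕ} (hψ : IsSumOfProducts ψ r)
    (hφ : IsSumOfProducts φ s) : IsSumOfProducts (ψ + φ) (r + s) := by
  obtain ⟨a, b, c, rfl⟩ := hψ
  obtain ⟨a', b', c', rfl⟩ := hφ
  exact ⟨Fin.append a a', Fin.append b b', Fin.append c c', by simp [Fin.sum_univ_add]⟩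

theorem of_fintype_sum {ι : Type*} [Fintype ι] (a : ι → A) (b : ι → B) (c : ι → C) :
    IsSumOfProducts (∑ i, a i ⊗ₜ[R] (b i ⊗ₜ[R] c i)) (Fintype.card ι) := by
  let e := Fintype.equivFin ι
  exact ⟨a ∘ e.symm, b ∘ e.symm, c ∘ e.symm, (e.symm.sum_comp _).symm⟩

theorem map {A' B' C' : Type*} [AddCommMonoid A'] [Module R A'] [AddCommMonoid B'] [Module R B']
    [AddCommMonoid C'] [Module R C'] (f : A →ₗ[R] A') (g : B →ₗ[R] B') (h : C →ₗ[R] C')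
    {ψ : A ⊗[R] (B ⊗[R] C)} {r : ℕ} (hψ : IsSumOfProducts ψ r) :
    IsSumOfProducts (TensorProduct.map f (TensorProduct.map g h) ψ) r := by
  obtain ⟨a, b, c, rfl⟩ := hψ
  exact ⟨f ∘ a, g ∘ b, h ∘ c, by simp⟩

end Module

theorem mul {R A B C : Type*} [CommSemiring R] [Semiring A] [Algebra R A]
    [Semiring B] [Algebra R B] [Semiring C] [Algebra R C]
    {ψ φ : A ⊗[R] (B ⊗[R] C)} {r s : ℕ} (hψ : IsSumOfProducts ψ r)
    (hφ : IsSumOfProducts φ s) : IsSumOfProducts (ψ * φ) (r * s) := by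
  obtain ⟨a, b, c, rfl⟩ := hψ
  obtain ⟨a', b', c', rfl⟩ := hφ
  let e := (finProdFinEquiv (m := r) (n := s)).symm
  refine ⟨fun k => a (e k).1 * a' (e k).2, fun k => b (e k).1 * b' (e k).2,
    fun k => c (e k).1 * c' (e k).2, ?_⟩
  rw [Fintype.sum_mul_sum, ← Fintype.sum_prod_type', ← e.symm.sum_comp]
  simp [e, Algebra.TensorProduct.tmul_mul_tmul]

end IsSumOfProducts

theorem tRank_le_of_isSumOfProducts {A B C : Type*} [AddCommGroup A] [Module ℂ A]
    [AddCommGroup B] [Module ℂ B] [AddCommGroup C] [Module ℂ C]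
    {ψ : A ⊗[ℂ] (B ⊗[ℂ] C)} {r : ℕ} (h : IsSumOfProducts ψ r) : tRank ψ ≤ r :=
  Nat.sInf_le h

/-- `W ⊗ W` with each party holding two qubits, written in the local basis
`e = |00⟩`, `g = |11⟩`, `p = |10⟩`, `q = |01⟩`. -/
def wSquare {R M : Type*} [CommSemiring R] [AddCommMonoid M] [Module R M] (e g p q : M) :
    M ⊗[R] (M ⊗[R] M) :=
  g ⊗ₜ (e ⊗ₜ e) + e ⊗ₜ (g ⊗ₜ e) + e ⊗ₜ (e ⊗ₜ g) +
    p ⊗ₜ (q ⊗ₜ e) + q ⊗ₜ (p ⊗ₜ e) + p ⊗ₜ (e ⊗ₜ q) + q ⊗ₜ (e ⊗ₜ p) +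
    e ⊗ₜ (p ⊗ₜ q) + e ⊗ₜ (q ⊗ₜ p)

/-- `(e + g)³ - (e - g)³ = 2 (g e e + e g e + e e g) + 2 g³`, and the sum of `± (e ± p ± q)³`,
signed by the product of the two inner signs, keeps exactly the terms with one `p` and one `q`,
each four times. -/
theorem wSquare_eq {K M : Type*} [Field K] [CharZero K] [AddCommGroup M] [Module K M]
    (e g p q : M) :
    wSquare (R := K) e g p q =
      ((2⁻¹ : K) • (e + g)) ⊗ₜ ((e + g) ⊗ₜ (e + g)) +
      (-(2⁻¹ : K) • (e - g)) ⊗ₜ ((e - g) ⊗ₜ (e - g)) +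
      (-g) ⊗ₜ (g ⊗ₜ g) +
      ((4⁻¹ : K) • (e + p + q)) ⊗ₜ ((e + p + q) ⊗ₜ (e + p + q)) +
      (-(4⁻¹ : K) • (e + p - q)) ⊗ₜ ((e + p - q) ⊗ₜ (e + p - q)) +
      (-(4⁻¹ : K) • (e - p + q)) ⊗ₜ ((e - p + q) ⊗ₜ (e - p + q)) +
      ((4⁻¹ : K) • (e - p - q)) ⊗ₜ ((e - p - q) ⊗ₜ (e - p - q)) := by
  simp only [wSquare, smul_add, smul_sub, tmul_add, add_tmul, tmul_sub, sub_tmul, neg_tmul,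
    ← smul_tmul', neg_smul]
  module

theorem isSumOfProducts_wSquare {K M : Type*} [Field K] [CharZero K] [AddCommGroup M]
    [Module K M] (e g p q : M) : IsSumOfProducts (wSquare (R := K) e g p q) 7 := by
  rw [wSquare_eq]
  exact (((((((IsSumOfProducts.tmul _ _ _).add (.tmul _ _ _)).add (.tmul _ _ _)).add
    (.tmul _ _ _)).add (.tmul _ _ _)).add (.tmul _ _ _)).add (.tmul _ _ _))

def pullFst (m n : ℕ) : V m →ₗ[ℂ] V (m + n) :=
  LinearMap.funLeft ℂ ℂ fun x k => x (Fin.castAdd n k)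

def pullSnd (m n : ℕ) : V n →ₗ[ℂ] V (m + n) :=
  LinearMap.funLeft ℂ ℂ fun x k => x (Fin.natAdd m k)

theorem pullFst_qb_mul_pullSnd_qb {m n : ℕ} (s : Fin m → Bool) (t : Fin n → Bool) :
    pullFst m n (qb s) * pullSnd m n (qb t) = qb (Fin.append s t) := by
  funext x
  obtain ⟨⟨y, z⟩, rfl⟩ := (Fin.appendEquiv m n).surjective x
  change _ = qb (Fin.appendEquiv m n (s, t)) _
  simp only [pullFst, pullSnd, qb, Pi.mul_apply, LinearMap.funLeft_apply, Pi.single_apply,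
    (Fin.appendEquiv m n).injective.eq_iff, Prod.mk.injEq, Fin.appendEquiv_apply,
    Fin.append_left, Fin.append_right, ite_zero_mul_ite_zero, one_mul]

def pullFst₃ (m n : ℕ) :
    V m ⊗[ℂ] (V m ⊗[ℂ] V m) →ₗ[ℂ] V (m + n) ⊗[ℂ] (V (m + n) ⊗[ℂ] V (m + n)) :=
  map (pullFst m n) (map (pullFst m n) (pullFst m n))

def pullSnd₃ (m n : ℕ) :
    V n ⊗[ℂ] (V n ⊗[ℂ] V n) →ₗ[ℂ] V (m + n) ⊗[ℂ] (V (m + n) ⊗[ℂ] V (m + n)) :=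
  map (pullSnd m n) (map (pullSnd m n) (pullSnd m n))

noncomputable def wTerm {n : ℕ} (f : Fin n → Fin 3) : V n ⊗[ℂ] (V n ⊗[ℂ] V n) :=
  qb (fun k => decide (f k = 0)) ⊗ₜ
    (qb (fun k => decide (f k = 1)) ⊗ₜ qb (fun k => decide (f k = 2)))

theorem Wn_eq_sum_wTerm (n : ℕ) : Wn n = ∑ f, wTerm f := rfl

theorem wTerm_append {m n : ℕ} (f : Fin m → Fin 3) (g : Fin n → Fin 3) :
    wTerm (Fin.append f g) = pullFst₃ m n (wTerm f) * pullSnd₃ m n (wTerm g) := by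
  have hdec : ∀ j : Fin 3, (fun k => decide (Fin.append f g k = j)) =
      Fin.append (fun k => decide (f k = j)) (fun k => decide (g k = j)) := fun j =>
    funext fun k => Fin.addCases (fun _ => by simp) (fun _ => by simp) k
  simp only [wTerm, pullFst₃, pullSnd₃, map_tmul, Algebra.TensorProduct.tmul_mul_tmul,
    pullFst_qb_mul_pullSnd_qb, hdec]

theorem Wn_add (m n : ℕ) : Wn (m + n) = pullFst₃ m n (Wn m) * pullSnd₃ m n (Wn n) := by
  rw [Wn_eq_sum_wTerm, Wn_eq_sum_wTerm, Wn_eq_sum_wTerm, map_sum, map_sum,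
    Fintype.sum_mul_sum (fun f => pullFst₃ m n (wTerm f)) (fun g => pullSnd₃ m n (wTerm g)),
    ← Fintype.sum_prod_type', ← (Fin.appendEquiv m n).sum_comp]
  exact Fintype.sum_congr _ _ fun fg => wTerm_append fg.1 fg.2

theorem isSumOfProducts_Wn (n : ℕ) : IsSumOfProducts (Wn n) (3 ^ n) := by
  have h := IsSumOfProducts.of_fintype_sum (R := ℂ)
    (fun f : Fin n → Fin 3 => qb fun k => decide (f k = 0))
    (fun f => qb fun k => decide (f k = 1)) (fun f => qb fun k => decide (f k = 2))
  rwa [Fintype.card_fun, Fintype.card_fin, Fintype.card_fin] at h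

theorem wTerm_pair (i j : Fin 3) :
    wTerm ((piFinTwoEquiv fun _ => Fin 3).symm (i, j)) =
      qb ![decide (i = 0), decide (j = 0)] ⊗ₜ
        (qb ![decide (i = 1), decide (j = 1)] ⊗ₜ qb ![decide (i = 2), decide (j = 2)]) := by
  have h : ∀ l : Fin 3, (fun k => decide ((piFinTwoEquiv fun _ => Fin 3).symm (i, j) k = l)) =
      ![decide (i = l), decide (j = l)] :=
    fun l => funext fun k => by fin_cases k <;> rfl
  simp only [wTerm, h]

theorem Wn_two :
    Wn 2 =
      wSquare (qb ![false, false]) (qb ![true, true]) (qb ![true, false]) (qb ![false, true]) := by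
  rw [Wn_eq_sum_wTerm, ← (piFinTwoEquiv fun _ => Fin 3).symm.sum_comp, Fintype.sum_prod_type]
  simp only [Fin.sum_univ_three, wTerm_pair, wSquare, Fin.reduceEq, decide_true, decide_false]
  abel

theorem isSumOfProducts_Wn_add {m n r s : ℕ} (hm : IsSumOfProducts (Wn m) r)
    (hn : IsSumOfProducts (Wn n) s) : IsSumOfProducts (Wn (m + n)) (r * s) := by
  rw [Wn_add]
  exact (hm.map _ _ _).mul (hn.map _ _ _)

theorem isSumOfProducts_Wn_two_mul (k : ℕ) : IsSumOfProducts (Wn (2 * k)) (7 ^ k) := by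
  induction k with
  | zero => simpa using isSumOfProducts_Wn 0
  | succ k ih =>
    rw [mul_add, mul_one, pow_succ]
    exact isSumOfProducts_Wn_add ih (Wn_two ▸ isSumOfProducts_wSquare _ _ _ _)

theorem rank_Wn_upper_bound_general (n : ℕ) :
    tRank (Wn n) ≤ if Even n then 7 ^ (n / 2) else 3 * 7 ^ ((n - 1) / 2) := by
  obtain ⟨k, rfl | rfl⟩ := Nat.even_or_odd' n
  · rw [if_pos (even_two_mul k), Nat.mul_div_cancel_left k two_pos]
    exact tRank_le_of_isSumOfProducts (isSumOfProducts_Wn_two_mul k)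
  · rw [if_neg (Nat.not_even_two_mul_add_one k), Nat.add_sub_cancel,
      Nat.mul_div_cancel_left k two_pos, mul_comm 3]
    exact tRank_le_of_isSumOfProducts
      (isSumOfProducts_Wn_add (isSumOfProducts_Wn_two_mul k) (isSumOfProducts_Wn 1))

theorem rank_Wn_upper_bound (n : ℕ) (hn : 1 ≤ n) :
    tRank (Wn n) ≤ if Even n then 7 ^ (n / 2) else 3 * 7 ^ ((n - 1) / 2) :=
  rank_Wn_upper_bound_general n
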